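/- Chain rule for directed information with an initial condition: for finite random variables x_0 and sequences x^n, e^n with x_i a deterministic function of (x_0, e^{i-1}) for each i, Σ_{i=1}^n I(x^i; e_i | e^{i-1}) = Σ_{i=1}^n [H(e_i | e^{i-1}) − H(e_i | e^{i-1}, x_0, x^i)] + Σ_{i=1}^n I(x_0; e_i | e^{i-1}, x^i); in particular I(x^n → e^n) ≤ I(x_0; e^n) when additionally H(x^i | x_0, e^{i-1}) = 0. -/

import Mathlib

open scoped BigOperators

/-- Distribution of a finite-valued random variable `X` under pmf `p`. -/
noncomputable def rvDist {Ω A : Type*} [Fintype Ω] [Fintype A] [DecidableEq A]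
    (p : Ω → ℝ) (X : Ω → A) (a : A) : ℝ := ∑ ω, if X ω = a then p ω else 0

/-- Shannon entropy `H(X)`. -/
noncomputable def ent {Ω A : Type*} [Fintype Ω] [Fintype A] [DecidableEq A]
    (p : Ω → ℝ) (X : Ω → A) : ℝ := ∑ a, Real.negMulLog (rvDist p X a)

/-- Conditional entropy `H(X | Y) = H(X,Y) - H(Y)`. -/
noncomputable def condEnt {Ω A B : Type*} [Fintype Ω] [Fintype A] [DecidableEq A]
    [Fintype B] [DecidableEq B] (p : Ω → ℝ) (X : Ω → A) (Y : Ω → B) : ℝ :=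
  ent p (fun ω => (X ω, Y ω)) - ent p Y

/-- Mutual information `I(X;Y) = H(X)+H(Y)-H(X,Y)`. -/
noncomputable def MI {Ω A B : Type*} [Fintype Ω] [Fintype A] [DecidableEq A]
    [Fintype B] [DecidableEq B] (p : Ω → ℝ) (X : Ω → A) (Y : Ω → B) : ℝ :=
  ent p X + ent p Y - ent p (fun ω => (X ω, Y ω))

/-- Conditional mutual information `I(X;Y|Z) = H(X|Z)+H(Y|Z)-H(X,Y|Z)`. -/
noncomputable def CMI {Ω A B C : Type*} [Fintype Ω] [Fintype A] [DecidableEq A]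
    [Fintype B] [DecidableEq B] [Fintype C] [DecidableEq C]
    (p : Ω → ℝ) (X : Ω → A) (Y : Ω → B) (Z : Ω → C) : ℝ :=
  condEnt p X Z + condEnt p Y Z - condEnt p (fun ω => (X ω, Y ω)) Z

/-- The prefix `x^i = (x_1, …, x_i)` of a random sequence, as a random variable. -/
def pre {Ω A : Type*} {n : ℕ} (x : Fin n → Ω → A) (i : ℕ) (h : i ≤ n) :
    Ω → (Fin i → A) := fun ω j => x (Fin.castLE h j) ω

/-- Directed information `I(x^n → y^n) = ∑_{i=1}^n I(x^i; y_i | y^{i-1})`. -/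
noncomputable def DI {Ω A B : Type*} [Fintype Ω] [Fintype A] [DecidableEq A]
    [Fintype B] [DecidableEq B] {n : ℕ}
    (p : Ω → ℝ) (x : Fin n → Ω → A) (y : Fin n → Ω → B) : ℝ :=
  ∑ i : Fin n, CMI p (pre x (i.1+1) i.isLt) (y i) (pre y i.1 i.isLt.le)


/-!
Both parts rest on the chain rule for conditional entropy:
`I(x^i; e_i | e^{i-1}) + I(x_0; e_i | e^{i-1}, x^i) = H(e_i | e^{i-1}) - H(e_i | e^{i-1}, x_0, x^i)`.
When `x^i` is a function of `(x_0, e^{i-1})`, the last entropy equals `H(e_i | x_0, e^{i-1})`,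
so the right-hand sides telescope to `H(e^n) - H(e^n | x_0) = I(x_0; e^n)`, and dropping the
nonnegative terms `I(x_0; e_i | e^{i-1}, x^i)` gives the bound. Nonnegativity of conditional mutual
information comes from `log x ≤ x - 1`, applied on each slice `Z = c` of the weight.
-/

open Real Finset Function

lemma negMulLog_sum {ι : Type*} (s : Finset ι) (f : ι → ℝ) :
    negMulLog (∑ i ∈ s, f i) = -∑ i ∈ s, f i * log (∑ j ∈ s, f j) := by
  rw [negMulLog, neg_mul, Finset.sum_mul]

/-- `log x ≤ x - 1` applied to `x = u v / (t w)`. -/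
lemma sub_mul_div_le_mul_log {t u v w : ℝ} (ht : 0 ≤ t) (htu : t ≤ u) (htv : t ≤ v)
    (huw : u ≤ w) : t - u * v / w ≤ t * (log t + log w - log u - log v) := by
  rcases ht.eq_or_lt with rfl | ht
  · have : 0 ≤ u * v / w := by
      have := htu.trans huw
      positivity
    simpa using this
  have hu : 0 < u := ht.trans_le htu
  have hv : 0 < v := ht.trans_le htv
  have hw : 0 < w := hu.trans_le huw
  have hlog := log_le_sub_one_of_pos (show 0 < u * v / (t * w) by positivity)
  rw [log_div (by positivity) (by positivity), log_mul hu.ne' hv.ne',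
    log_mul ht.ne' hw.ne'] at hlog
  have hcancel : t * (u * v / (t * w)) = u * v / w := by field_simp
  nlinarith [mul_le_mul_of_nonneg_left hlog ht.le]

lemma sum_sum_marginal_mul_div {A B : Type*} [Fintype A] [Fintype B] (f : A → B → ℝ) :
    ∑ a, ∑ b, (∑ b', f a b') * (∑ a', f a' b) / ∑ a', ∑ b', f a' b' = ∑ a, ∑ b, f a b := by
  set T := ∑ a, ∑ b, f a b
  calc ∑ a, ∑ b, (∑ b', f a b') * (∑ a', f a' b) / T
      = (∑ a, ∑ b', f a b') * (∑ b, ∑ a', f a' b) / T := by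
        simp only [Finset.sum_mul_sum, Finset.sum_div]
    _ = T * T / T := by rw [Finset.sum_comm (f := fun b a => f a b)]
    _ = T := mul_self_div_self T

/-- Nonnegativity of the mutual information of an unnormalised joint weight `f`. -/
lemma sum_negMulLog_add_negMulLog_sum_le {A B : Type*} [Fintype A] [Fintype B]
    (f : A → B → ℝ) (hf : ∀ a b, 0 ≤ f a b) :
    ∑ a, ∑ b, negMulLog (f a b) + negMulLog (∑ a, ∑ b, f a b)
      ≤ ∑ a, negMulLog (∑ b, f a b) + ∑ b, negMulLog (∑ a, f a b) := by
  have hbound : ∑ a, ∑ b, (f a b - (∑ b', f a b') * (∑ a', f a' b) / ∑ a', ∑ b', f a' b')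
      ≤ ∑ a, ∑ b, f a b * (log (f a b) + log (∑ a', ∑ b', f a' b')
          - log (∑ b', f a b') - log (∑ a', f a' b)) :=
    Finset.sum_le_sum fun a _ => Finset.sum_le_sum fun b _ =>
      sub_mul_div_le_mul_log (hf a b)
        (Finset.single_le_sum (fun b' _ => hf a b') (Finset.mem_univ b))
        (Finset.single_le_sum (fun a' _ => hf a' b) (Finset.mem_univ a))
        (Finset.single_le_sum (fun a' _ => Finset.sum_nonneg fun b' _ => hf a' b')
          (Finset.mem_univ a))
  simp only [Finset.sum_sub_distrib, sum_sum_marginal_mul_div, sub_self, mul_add, mul_sub,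
    Finset.sum_add_distrib] at hbound
  have hcol : ∑ b, negMulLog (∑ a, f a b) = -∑ a, ∑ b, f a b * log (∑ a', f a' b) := by
    rw [Finset.sum_comm, ← Finset.sum_neg_distrib]
    exact Finset.sum_congr rfl fun b _ => negMulLog_sum _ _
  rw [hcol]
  simp only [negMulLog, neg_mul, Finset.sum_neg_distrib, Finset.sum_mul]
  linarith

section Entropy

variable {Ω A B C : Type*} [Fintype Ω] [Fintype A] [DecidableEq A] [Fintype B] [DecidableEq B]
  [Fintype C] [DecidableEq C] (p : Ω → ℝ)

lemma rvDist_nonneg (hp : ∀ ω, 0 ≤ p ω) (X : Ω → A) (a : A) : 0 ≤ rvDist p X a :=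
  Finset.sum_nonneg fun ω _ => by split_ifs <;> simp [hp ω]

lemma sum_rvDist (X : Ω → A) : ∑ a, rvDist p X a = ∑ ω, p ω := by
  simp only [rvDist]
  rw [Finset.sum_comm]
  simp

lemma rvDist_eq_sum_rvDist_pair_left (X : Ω → A) (Y : Ω → B) (a : A) :
    rvDist p X a = ∑ b, rvDist p (fun ω => (X ω, Y ω)) (a, b) := by
  simp only [rvDist, Prod.mk.injEq, ite_and]
  rw [Finset.sum_comm]
  simp

lemma rvDist_eq_sum_rvDist_pair_right (X : Ω → A) (Y : Ω → B) (b : B) :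
    rvDist p Y b = ∑ a, rvDist p (fun ω => (X ω, Y ω)) (a, b) := by
  simp only [rvDist, Prod.mk.injEq, ite_and]
  rw [Finset.sum_comm]
  simp

lemma rvDist_pair_eq_rvDist_slice (X : Ω → A) (Z : Ω → C) (a : A) (c : C) :
    rvDist p (fun ω => (X ω, Z ω)) (a, c) = rvDist (fun ω => if Z ω = c then p ω else 0) X a := by
  simp only [rvDist, Prod.mk.injEq, ite_and]

lemma ent_eq_of_injective {f : A → B} (hf : Injective f) {X : Ω → A} {Y : Ω → B}
    (hY : ∀ ω, Y ω = f (X ω)) : ent p Y = ent p X := by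
  obtain rfl : Y = fun ω => f (X ω) := funext hY
  refine (Fintype.sum_of_injective f hf _ _ (fun b hb => ?_) fun a => ?_).symm
  · rw [rvDist, Finset.sum_eq_zero fun ω _ => if_neg fun h => hb ⟨X ω, h⟩, negMulLog_zero]
  · simp only [rvDist, hf.eq_iff]

lemma ent_const (c : A) : ent p (fun _ => c) = negMulLog (∑ ω, p ω) := by
  rw [ent, Finset.sum_eq_single c (fun a _ ha => by simp [rvDist, Ne.symm ha]) (by simp)]
  simp [rvDist]

lemma ent_pair_add_negMulLog_le (hp : ∀ ω, 0 ≤ p ω) (X : Ω → A) (Y : Ω → B) :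
    ent p (fun ω => (X ω, Y ω)) + negMulLog (∑ ω, p ω) ≤ ent p X + ent p Y := by
  have h := sum_negMulLog_add_negMulLog_sum_le (fun a b => rvDist p (fun ω => (X ω, Y ω)) (a, b))
    fun a b => rvDist_nonneg p hp _ _
  simp only [← rvDist_eq_sum_rvDist_pair_left, ← rvDist_eq_sum_rvDist_pair_right,
    sum_rvDist] at h
  rwa [ent, Fintype.sum_prod_type]

lemma ent_pair_eq_sum_slice (X : Ω → A) (Z : Ω → C) :
    ent p (fun ω => (X ω, Z ω)) = ∑ c, ent (fun ω => if Z ω = c then p ω else 0) X := by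
  rw [ent, Fintype.sum_prod_type, Finset.sum_comm]
  simp only [rvDist_pair_eq_rvDist_slice, ent]

lemma CMI_nonneg (hp : ∀ ω, 0 ≤ p ω) (X : Ω → A) (Y : Ω → B) (Z : Ω → C) :
    0 ≤ CMI p X Y Z := by
  have hZ : ent p Z = ∑ c, negMulLog (∑ ω, if Z ω = c then p ω else 0) := rfl
  have h := Finset.sum_le_sum fun (c : C) (_ : c ∈ Finset.univ) =>
    ent_pair_add_negMulLog_le (fun ω => if Z ω = c then p ω else 0)
      (fun ω => by split_ifs <;> simp [hp ω]) X Y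
  simp only [Finset.sum_add_distrib] at h
  rw [CMI, condEnt, condEnt, condEnt, ent_pair_eq_sum_slice p X Z, ent_pair_eq_sum_slice p Y Z,
    ent_pair_eq_sum_slice p (fun ω => (X ω, Y ω)) Z, hZ]
  linarith

end Entropy

section Identities

variable {Ω M A B C : Type*} [Fintype Ω] [Fintype M] [DecidableEq M] [Fintype A] [DecidableEq A]
  [Fintype B] [DecidableEq B] [Fintype C] [DecidableEq C] (p : Ω → ℝ)

lemma condEnt_eq_of_injective {f : B → C} (hf : Injective f) (X : Ω → A) {Z : Ω → B}
    {Z' : Ω → C} (hZ : ∀ ω, Z' ω = f (Z ω)) : condEnt p X Z' = condEnt p X Z := by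
  rw [condEnt, condEnt, ent_eq_of_injective p hf hZ,
    ent_eq_of_injective p (injective_id.prodMap hf) (X := fun ω => (X ω, Z ω))
      fun ω => by simp [hZ]]

lemma condEnt_const (X : Ω → A) (c : B) :
    condEnt p X (fun _ => c) = ent p X - negMulLog (∑ ω, p ω) := by
  rw [condEnt, ent_const,
    ent_eq_of_injective p (f := fun a => (a, c)) (fun _ _ h => congrArg Prod.fst h) fun _ => rfl]

lemma condEnt_pair (X : Ω → A) (Y : Ω → B) (Z : Ω → C) :
    condEnt p (fun ω => (X ω, Y ω)) Z = condEnt p X Z + condEnt p Y (fun ω => (Z ω, X ω)) := by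
  have h₁ : ent p (fun ω => ((X ω, Y ω), Z ω)) = ent p (fun ω => (Y ω, Z ω, X ω)) :=
    ent_eq_of_injective p (f := fun t : B × C × A => ((t.2.2, t.1), t.2.1))
      (fun _ _ h => by simp_all [Prod.ext_iff]) fun _ => rfl
  have h₂ : ent p (fun ω => (Z ω, X ω)) = ent p (fun ω => (X ω, Z ω)) :=
    ent_eq_of_injective p Prod.swap_injective fun _ => rfl
  rw [condEnt, condEnt, condEnt, h₁, h₂]
  ring

lemma CMI_eq_condEnt_sub (X : Ω → A) (Y : Ω → B) (Z : Ω → C) :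
    CMI p X Y Z = condEnt p Y Z - condEnt p Y (fun ω => (Z ω, X ω)) := by
  rw [CMI, condEnt_pair]
  ring

lemma CMI_comm (X : Ω → A) (Y : Ω → B) (Z : Ω → C) : CMI p X Y Z = CMI p Y X Z := by
  have h : ent p (fun ω => ((X ω, Y ω), Z ω)) = ent p (fun ω => ((Y ω, X ω), Z ω)) :=
    ent_eq_of_injective p (Prod.swap_injective.prodMap injective_id) fun _ => rfl
  simp only [CMI, condEnt, h]
  ring

lemma MI_eq_ent_sub_condEnt (X : Ω → A) (Y : Ω → B) : MI p X Y = ent p Y - condEnt p Y X := by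
  have h : ent p (fun ω => (Y ω, X ω)) = ent p (fun ω => (X ω, Y ω)) :=
    ent_eq_of_injective p Prod.swap_injective fun _ => rfl
  rw [MI, condEnt, h]
  ring

lemma condEnt_nonneg (hp : ∀ ω, 0 ≤ p ω) (X : Ω → A) (Z : Ω → C) : 0 ≤ condEnt p X Z := by
  have h : condEnt p (fun ω => (X ω, X ω)) Z = condEnt p X Z := by
    rw [condEnt, condEnt, ent_eq_of_injective p (f := fun t : A × C => ((t.1, t.1), t.2))
      (fun _ _ h => by simp_all [Prod.ext_iff]) (X := fun ω => (X ω, Z ω)) fun _ => rfl]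
  simpa [CMI, h] using CMI_nonneg p hp X X Z

lemma condEnt_pair_right_of_condEnt_eq_zero (hp : ∀ ω, 0 ≤ p ω) {V : Ω → B} {W : Ω → C}
    (h : condEnt p V W = 0) (Y : Ω → A) :
    condEnt p Y (fun ω => (W ω, V ω)) = condEnt p Y W := by
  have hVY := CMI_eq_condEnt_sub p V Y W
  have hYV := CMI_eq_condEnt_sub p Y V W
  rw [CMI_comm] at hVY
  linarith [CMI_nonneg p hp Y V W, condEnt_nonneg p hp V (fun ω => (W ω, Y ω))]

lemma CMI_add_CMI (X : Ω → A) (Y : Ω → B) (Z : Ω → C) (W : Ω → M) :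
    CMI p X Y Z + CMI p W Y (fun ω => (Z ω, X ω))
      = condEnt p Y Z - condEnt p Y (fun ω => (Z ω, W ω, X ω)) := by
  have h : condEnt p Y (fun ω => ((Z ω, X ω), W ω)) = condEnt p Y (fun ω => (Z ω, W ω, X ω)) :=
    condEnt_eq_of_injective p (f := fun t : C × M × A => ((t.1, t.2.2), t.2.1))
      (fun _ _ h => by simp_all [Prod.ext_iff]) Y fun _ => rfl
  rw [CMI_eq_condEnt_sub, CMI_eq_condEnt_sub, h]
  ring

end Identities

lemma pre_succ {Ω B : Type*} {n : ℕ} {e : Fin n → Ω → B} (i : Fin n) (ω : Ω) :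
    pre e (i.1 + 1) i.isLt ω = Fin.snoc (pre e i.1 i.isLt.le ω) (e i ω) := by
  funext j
  induction j using Fin.lastCases with
  | last => rw [Fin.snoc_last]; rfl
  | cast j => simp [pre]

section Prefix

variable {Ω B C : Type*} [Fintype Ω] [Fintype B] [DecidableEq B] [Fintype C] [DecidableEq C]
  (p : Ω → ℝ) {n : ℕ}

lemma ent_pair_pre_succ (W : Ω → C) (e : Fin n → Ω → B) (i : Fin n) :
    ent p (fun ω => (e i ω, W ω, pre e i.1 i.isLt.le ω))
      = ent p (fun ω => (W ω, pre e (i.1 + 1) i.isLt ω)) :=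
  (ent_eq_of_injective p (f := fun t : B × C × (Fin i.1 → B) => (t.2.1, Fin.snoc t.2.2 t.1))
    (fun _ _ h => by simp_all [Prod.ext_iff, Fin.snoc_inj]) fun ω => by rw [pre_succ]).symm

lemma sum_condEnt_pre (W : Ω → C) (e : Fin n → Ω → B) :
    ∑ i : Fin n, condEnt p (e i) (fun ω => (W ω, pre e i.1 i.isLt.le ω))
      = condEnt p (fun ω i => e i ω) W := by
  let F : ℕ → ℝ := fun k => if hk : k ≤ n then ent p (fun ω => (W ω, pre e k hk ω)) else 0
  have hstep (i : Fin n) :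
      condEnt p (e i) (fun ω => (W ω, pre e i.1 i.isLt.le ω)) = F (i.1 + 1) - F i.1 := by
    simp only [F, dif_pos (show i.1 + 1 ≤ n from i.isLt), dif_pos i.isLt.le, condEnt,
      ent_pair_pre_succ]
  have hF₀ : F 0 = ent p W :=
    (dif_pos n.zero_le).trans <| ent_eq_of_injective p (f := fun w => (w, default))
      (fun _ _ h => congrArg Prod.fst h) fun _ => Prod.ext rfl (Subsingleton.elim _ _)
  have hFn : F n = ent p (fun ω => ((fun i => e i ω), W ω)) :=
    (dif_pos le_rfl).trans <| ent_eq_of_injective p Prod.swap_injective fun _ => rfl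
  rw [Finset.sum_congr rfl fun i _ => hstep i, Fin.sum_univ_eq_sum_range (fun k => F (k + 1) - F k),
    Finset.sum_range_sub, hF₀, hFn, condEnt]

lemma sum_condEnt_pre_eq_ent (hp1 : ∑ ω, p ω = 1) (e : Fin n → Ω → B) :
    ∑ i : Fin n, condEnt p (e i) (pre e i.1 i.isLt.le) = ent p (fun ω i => e i ω) := by
  have h := sum_condEnt_pre p (fun _ => ()) e
  rw [condEnt_const, hp1, negMulLog_one, sub_zero] at h
  rw [← h]
  exact Finset.sum_congr rfl fun i _ => (condEnt_eq_of_injective p (f := fun v => ((), v))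
    (fun _ _ h => congrArg Prod.snd h) _ fun _ => rfl).symm

end Prefix

lemma sum_condEnt_sub_condEnt_eq_MI {Ω M A B : Type*} [Fintype Ω] [Fintype M] [DecidableEq M]
    [Fintype A] [DecidableEq A] [Fintype B] [DecidableEq B] {n : ℕ} (p : Ω → ℝ)
    (hp : ∀ ω, 0 ≤ p ω) (hp1 : ∑ ω, p ω = 1) (x0 : Ω → M) (x : Fin n → Ω → A)
    (e : Fin n → Ω → B)
    (hdet : ∀ i : Fin n, condEnt p (pre x (i.1 + 1) i.isLt)
      (fun ω => (x0 ω, pre e i.1 i.isLt.le ω)) = 0) :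
    ∑ i : Fin n, (condEnt p (e i) (pre e i.1 i.isLt.le) -
        condEnt p (e i) (fun ω => (pre e i.1 i.isLt.le ω, x0 ω, pre x (i.1 + 1) i.isLt ω)))
      = MI p x0 (fun ω i => e i ω) := by
  have hdrop (i : Fin n) :
      condEnt p (e i) (fun ω => (pre e i.1 i.isLt.le ω, x0 ω, pre x (i.1 + 1) i.isLt ω))
        = condEnt p (e i) (fun ω => (x0 ω, pre e i.1 i.isLt.le ω)) := by
    have hinj : Injective fun t : (Fin i.1 → B) × M × (Fin (i.1 + 1) → A) =>
        ((t.2.1, t.1), t.2.2) := fun _ _ h => by simp_all [Prod.ext_iff]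
    rw [← condEnt_pair_right_of_condEnt_eq_zero p hp (hdet i) (e i)]
    exact (condEnt_eq_of_injective p hinj (e i) fun _ => rfl).symm
  rw [Finset.sum_sub_distrib, Finset.sum_congr rfl fun i _ => hdrop i, sum_condEnt_pre,
    sum_condEnt_pre_eq_ent p hp1, MI_eq_ent_sub_condEnt]

theorem directed_info_chain_rule_initial_general {Ω M A B : Type*} [Fintype Ω]
    [Fintype M] [DecidableEq M] [Fintype A] [DecidableEq A]
    [Fintype B] [DecidableEq B] {n : ℕ} (p : Ω → ℝ)
    (hp : ∀ ω, 0 ≤ p ω) (hp1 : ∑ ω, p ω = 1)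
    (x0 : Ω → M) (x : Fin n → Ω → A) (e : Fin n → Ω → B) :
    (∑ i : Fin n, CMI p (pre x (i.1+1) i.isLt) (e i) (pre e i.1 i.isLt.le)) =
      (∑ i : Fin n, (condEnt p (e i) (pre e i.1 i.isLt.le) -
        condEnt p (e i) (fun ω => (pre e i.1 i.isLt.le ω, x0 ω, pre x (i.1+1) i.isLt ω))))
      - ∑ i : Fin n, CMI p x0 (e i)
          (fun ω => (pre e i.1 i.isLt.le ω, pre x (i.1+1) i.isLt ω)) ∧
    ((∀ i : Fin n, condEnt p (pre x (i.1+1) i.isLt)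
        (fun ω => (x0 ω, pre e i.1 i.isLt.le ω)) = 0) →
      DI p x e ≤ MI p x0 (fun ω i => e i ω)) := by
  refine ⟨?_, fun hdet => ?_⟩
  · rw [← Finset.sum_sub_distrib]
    exact Finset.sum_congr rfl fun i _ => eq_sub_of_add_eq (CMI_add_CMI p _ _ _ _)
  · rw [DI, ← sum_condEnt_sub_condEnt_eq_MI p hp hp1 x0 x e hdet]
    refine Finset.sum_le_sum fun i _ => ?_
    rw [← CMI_add_CMI]
    exact le_add_of_nonneg_right (CMI_nonneg p hp _ _ _)

/-- chain rule for directed information with an initial condition,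
and the consequence `I(x^n → e^n) ≤ I(x_0; e^n)`. -/
theorem directed_info_chain_rule_initial {Ω M A B : Type*} [Fintype Ω]
    [Fintype M] [DecidableEq M] [Fintype A] [DecidableEq A]
    [Fintype B] [DecidableEq B] {n : ℕ} (p : Ω → ℝ)
    (hp : ∀ ω, 0 ≤ p ω) (hp1 : ∑ ω, p ω = 1)
    (x0 : Ω → M) (x : Fin n → Ω → A) (e : Fin n → Ω → B)
    (hdet : ∀ i : Fin n, condEnt p (x i) (fun ω => (x0 ω, pre e i.1 i.isLt.le ω)) = 0) :
    (∑ i : Fin n, CMI p (pre x (i.1+1) i.isLt) (e i) (pre e i.1 i.isLt.le)) =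
      (∑ i : Fin n, (condEnt p (e i) (pre e i.1 i.isLt.le) -
        condEnt p (e i) (fun ω => (pre e i.1 i.isLt.le ω, x0 ω, pre x (i.1+1) i.isLt ω))))
      - ∑ i : Fin n, CMI p x0 (e i)
          (fun ω => (pre e i.1 i.isLt.le ω, pre x (i.1+1) i.isLt ω)) ∧
    ((∀ i : Fin n, condEnt p (pre x (i.1+1) i.isLt)
        (fun ω => (x0 ω, pre e i.1 i.isLt.le ω)) = 0) →
      DI p x e ≤ MI p x0 (fun ω i => e i ω)) :=
  directed_info_chain_rule_initial_general p hp hp1 x0 x e
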